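/- For any unit vector ψ of the n-fold tensor power of ℂ² and any unit vector φ of the m-fold tensor power of ℂ²: Prob(√NOT^(n+m+1)(AND(ψ, φ))) = 1/2. -/

import Mathlib

open Complex Finset

noncomputable section

/-- The `n`-fold tensor power of `ℂ²`, identified with `EuclideanSpace ℂ (Fin (2^n))`. -/
abbrev QReg (n : ℕ) := EuclideanSpace ℂ (Fin (2 ^ n))

/-- Flip the last bit of a binary index. -/
def flipIdx {N : ℕ} (j : Fin N) : Fin N :=
  ⟨(j.val ^^^ 1) % N, Nat.mod_lt _ j.pos⟩

/-- The gate `NOT⁽ⁿ⁾`: flips the last bit of each basis label, i.e. swaps the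
coordinates `a_{2k}` and `a_{2k+1}`. -/
def NOTg (n : ℕ) (ψ : QReg n) : QReg n := WithLp.toLp 2 fun j => ψ (flipIdx j)

/-- The gate `√NOT⁽ⁿ⁾`: replaces each coordinate pair `(a_{2k}, a_{2k+1})` by
`(½(1+i)a_{2k} + ½(1−i)a_{2k+1}, ½(1−i)a_{2k} + ½(1+i)a_{2k+1})`. -/
def sqNOTg (n : ℕ) (ψ : QReg n) : QReg n := WithLp.toLp 2 fun j =>
  if j.val % 2 = 0 then
    (1 + Complex.I) / 2 * ψ j + (1 - Complex.I) / 2 * ψ (flipIdx j)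
  else
    (1 - Complex.I) / 2 * ψ (flipIdx j) + (1 + Complex.I) / 2 * ψ j

/-- Action of the Toffoli gate `T⁽ⁿ'ᵐ'¹⁾` on basis indices: if the bits `xₙ`
(weight `2^(m+1)`) and `y_m` (weight `2`) are both `1`, flip the last bit `z`. -/
def toffIdx (n m : ℕ) (j : Fin (2 ^ (n + m + 1))) : Fin (2 ^ (n + m + 1)) :=
  if (j.val / 2 ^ (m + 1)) % 2 = 1 ∧ (j.val / 2) % 2 = 1 then flipIdx j else j

/-- The Toffoli gate `T⁽ⁿ'ᵐ'¹⁾`. -/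
def Tg (n m : ℕ) (ψ : QReg (n + m + 1)) : QReg (n + m + 1) := WithLp.toLp 2 fun j => ψ (toffIdx n m j)

/-- Tensor product of coefficient vectors: `(ψ ⊗ φ)_{2^m·j + k} = ψ_j · φ_k`. -/
def tensor {n m : ℕ} (ψ : QReg n) (φ : QReg m) : QReg (n + m) := WithLp.toLp 2 fun j =>
  ψ ⟨j.val / 2 ^ m, by
        have h : (j : ℕ) < 2 ^ n * 2 ^ m :=
          lt_of_lt_of_le j.isLt (le_of_eq (pow_add 2 n m))
        exact (Nat.div_lt_iff_lt_mul (Nat.two_pow_pos m)).mpr h⟩ *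
  φ ⟨j.val % 2 ^ m, Nat.mod_lt _ (Nat.two_pow_pos m)⟩

/-- The bit `|0⟩ = e₀ ∈ ℂ²`. -/
def ket0 : QReg 1 := WithLp.toLp 2 fun j => if j.val = 0 then 1 else 0

/-- `AND(ψ, φ) := T⁽ⁿ'ᵐ'¹⁾(ψ ⊗ φ ⊗ |0⟩)`. -/
def ANDg (n m : ℕ) (ψ : QReg n) (φ : QReg m) : QReg (n + m + 1) :=
  Tg n m (tensor (tensor ψ φ) ket0)

/-- `OR(ψ, φ) := NOT(AND(NOT ψ, NOT φ))`. -/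
def ORg (n m : ℕ) (ψ : QReg n) (φ : QReg m) : QReg (n + m + 1) :=
  NOTg (n + m + 1) (ANDg n m (NOTg n ψ) (NOTg m φ))

/-- The probability-value of a vector: the sum of `‖a_j‖²` over the odd indices `j`
(those whose basis label ends with the bit `1`). -/
def Prob {n : ℕ} (ψ : QReg n) : ℝ :=
  ∑ j ∈ Finset.univ.filter (fun j : Fin (2 ^ n) => j.val % 2 = 1), ‖ψ j‖ ^ 2


/-! The Toffoli gate only permutes each coordinate pair `{2k, 2k+1}` within itself, and
`ψ ⊗ φ ⊗ |0⟩` vanishes on odd coordinates, so every such pair of `AND(ψ, φ)` has at most one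
nonzero entry. On a pair of that shape `√NOT` puts exactly half of the pair's weight on the odd
coordinate, since `|(1 ± i)/2|² = 1/2`. Summing over the pairs,
`Prob = ‖AND(ψ, φ)‖² / 2 = ‖ψ‖² ‖φ‖² / 2`, the Toffoli gate and the tensor product being isometric. -/

lemma flipIdx_val {N : ℕ} (hN : Even N) (j : Fin N) :
    (flipIdx j : ℕ) = 2 * (j / 2) + (1 - j % 2) := by
  have hj := j.isLt
  rw [Nat.even_iff] at hN
  simp only [flipIdx]
  rcases Nat.mod_two_eq_zero_or_one j with h | h
  · rw [Nat.xor_one_of_even (Nat.even_iff.2 h), Nat.mod_eq_of_lt (by omega)]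
    omega
  · rw [Nat.xor_one_of_odd (Nat.odd_iff.2 h), Nat.mod_eq_of_lt (by omega)]
    omega

lemma flipIdx_val_mod_two {N : ℕ} (hN : Even N) (j : Fin N) :
    (flipIdx j : ℕ) % 2 = 1 - j % 2 := by
  have := flipIdx_val hN j
  omega

lemma flipIdx_val_div_two {N : ℕ} (hN : Even N) (j : Fin N) :
    (flipIdx j : ℕ) / 2 = j / 2 := by
  have := flipIdx_val hN j
  omega

lemma flipIdx_flipIdx {N : ℕ} (hN : Even N) (j : Fin N) : flipIdx (flipIdx j) = j := by
  have h₁ := flipIdx_val hN j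
  have h₂ := flipIdx_val hN (flipIdx j)
  ext
  omega

lemma sum_odd_comp_flipIdx {N : ℕ} {M : Type*} [AddCommMonoid M] (hN : Even N) (f : Fin N → M) :
    ∑ j ∈ univ.filter (fun j : Fin N => j.val % 2 = 1), f (flipIdx j) =
      ∑ j ∈ univ.filter (fun j : Fin N => ¬ j.val % 2 = 1), f j := by
  refine sum_nbij' flipIdx flipIdx ?_ ?_ (fun j _ => flipIdx_flipIdx hN j)
    (fun j _ => flipIdx_flipIdx hN j) (fun _ _ => rfl)
  all_goals
    intro j
    have := flipIdx_val_mod_two hN j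
    simp only [mem_filter, mem_univ, true_and]
    omega

lemma even_two_pow_succ (k : ℕ) : Even (2 ^ (k + 1)) :=
  Nat.even_pow.2 ⟨even_two, k.succ_ne_zero⟩

lemma toffIdx_flipIdx (n m : ℕ) (j : Fin (2 ^ (n + m + 1))) :
    toffIdx n m (flipIdx j) = flipIdx (toffIdx n m j) := by
  have hN := even_two_pow_succ (n + m)
  have hdiv := flipIdx_val_div_two hN j
  have hhigh : (flipIdx j : ℕ) / 2 ^ (m + 1) = j / 2 ^ (m + 1) := by
    rw [show 2 ^ (m + 1) = 2 * 2 ^ m from pow_succ' 2 m, ← Nat.div_div_eq_div_mul, ← Nat.div_div_eq_div_mul, hdiv]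
  simp only [toffIdx, hhigh, hdiv]
  split_ifs <;> rfl

lemma toffIdx_involutive (n m : ℕ) : Function.Involutive (toffIdx n m) := by
  intro j
  by_cases h : (j.val / 2 ^ (m + 1)) % 2 = 1 ∧ (j.val / 2) % 2 = 1
  · have hj : toffIdx n m j = flipIdx j := if_pos h
    rw [hj, toffIdx_flipIdx, hj, flipIdx_flipIdx (even_two_pow_succ _)]
  · have hj : toffIdx n m j = j := if_neg h
    rw [hj, hj]

lemma EuclideanSpace.norm_toLp_comp_perm {𝕜 ι : Type*} [RCLike 𝕜] [Fintype ι]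
    (v : EuclideanSpace 𝕜 ι) (σ : Equiv.Perm ι) :
    ‖(WithLp.toLp 2 fun j => v (σ j) : EuclideanSpace 𝕜 ι)‖ = ‖v‖ := by
  simp only [EuclideanSpace.norm_eq]
  rw [Equiv.sum_comp σ (fun j => ‖v j‖ ^ 2)]

lemma norm_Tg (n m : ℕ) (v : QReg (n + m + 1)) : ‖Tg n m v‖ = ‖v‖ :=
  EuclideanSpace.norm_toLp_comp_perm v (toffIdx_involutive n m).toPerm

lemma norm_tensor {n m : ℕ} (ψ : QReg n) (φ : QReg m) : ‖tensor ψ φ‖ = ‖ψ‖ * ‖φ‖ := by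
  let e : Fin (2 ^ (n + m)) ≃ Fin (2 ^ n) × Fin (2 ^ m) :=
    (finCongr (pow_add 2 n m)).trans finProdFinEquiv.symm
  have hsq : ‖tensor ψ φ‖ ^ 2 = (‖ψ‖ * ‖φ‖) ^ 2 := by
    rw [mul_pow, EuclideanSpace.norm_sq_eq, EuclideanSpace.norm_sq_eq, EuclideanSpace.norm_sq_eq,
      sum_mul_sum, ← Fintype.sum_prod_type', ← e.sum_comp]
    refine sum_congr rfl fun j _ => ?_
    rw [← mul_pow, ← norm_mul]
    -- `e` reads off the indices `j / 2 ^ m` and `j % 2 ^ m` used in `tensor`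
    rfl
  exact (sq_eq_sq₀ (norm_nonneg _) (by positivity)).1 hsq

lemma norm_ket0 : ‖ket0‖ = 1 := by
  simp [EuclideanSpace.norm_eq, ket0, Fin.sum_univ_two]

lemma tensor_ket0_apply_of_odd {k : ℕ} (v : QReg k) {j : Fin (2 ^ (k + 1))} (hj : j.val % 2 = 1) :
    tensor v ket0 j = 0 := by
  simp [tensor, ket0, hj]

lemma norm_ANDg (n m : ℕ) (ψ : QReg n) (φ : QReg m) : ‖ANDg n m ψ φ‖ = ‖ψ‖ * ‖φ‖ := by
  rw [ANDg, norm_Tg, norm_tensor, norm_tensor, norm_ket0, mul_one]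

lemma ANDg_apply_eq_zero_or (n m : ℕ) (ψ : QReg n) (φ : QReg m) (j : Fin (2 ^ (n + m + 1))) :
    ANDg n m ψ φ j = 0 ∨ ANDg n m ψ φ (flipIdx j) = 0 := by
  change tensor (tensor ψ φ) ket0 (toffIdx n m j) = 0 ∨
    tensor (tensor ψ φ) ket0 (toffIdx n m (flipIdx j)) = 0
  rw [toffIdx_flipIdx]
  have := flipIdx_val_mod_two (even_two_pow_succ _) (toffIdx n m j)
  rcases Nat.mod_two_eq_zero_or_one (toffIdx n m j) with h | h
  · exact .inr (tensor_ket0_apply_of_odd _ (by omega))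
  · exact .inl (tensor_ket0_apply_of_odd _ h)

lemma norm_sq_one_add_I_div_two : ‖(1 + I) / 2‖ ^ 2 = 1 / 2 := by
  rw [Complex.sq_norm, normSq_apply]
  norm_num

lemma norm_sq_one_sub_I_div_two : ‖(1 - I) / 2‖ ^ 2 = 1 / 2 := by
  rw [Complex.sq_norm, normSq_apply]
  norm_num

lemma norm_sq_sqNOTg_apply_of_odd {k : ℕ} (v : QReg k) {j : Fin (2 ^ k)} (hj : j.val % 2 = 1)
    (hv : v j = 0 ∨ v (flipIdx j) = 0) :
    ‖sqNOTg k v j‖ ^ 2 = (‖v j‖ ^ 2 + ‖v (flipIdx j)‖ ^ 2) / 2 := by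
  simp only [sqNOTg, hj, one_ne_zero, if_false]
  rcases hv with h | h
  · rw [h, mul_zero, add_zero, norm_mul, mul_pow, norm_sq_one_sub_I_div_two, norm_zero]
    ring
  · rw [h, mul_zero, zero_add, norm_mul, mul_pow, norm_sq_one_add_I_div_two, norm_zero]
    ring

lemma Prob_sqNOTg {k : ℕ} (v : QReg (k + 1)) (hv : ∀ j, v j = 0 ∨ v (flipIdx j) = 0) :
    Prob (sqNOTg (k + 1) v) = ‖v‖ ^ 2 / 2 := by
  rw [Prob, sum_congr rfl fun j hj => norm_sq_sqNOTg_apply_of_odd v (mem_filter.1 hj).2 (hv j),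
    ← sum_div, sum_add_distrib, sum_odd_comp_flipIdx (even_two_pow_succ k) (fun j => ‖v j‖ ^ 2),
    sum_filter_add_sum_filter_not, EuclideanSpace.norm_sq_eq]

theorem stmt12 (n m : ℕ) (ψ : QReg n) (φ : QReg m) (hψ : ‖ψ‖ = 1) (hφ : ‖φ‖ = 1) :
    Prob (sqNOTg (n + m + 1) (ANDg n m ψ φ)) = 1 / 2 := by
  rw [Prob_sqNOTg _ (ANDg_apply_eq_zero_or n m ψ φ), norm_ANDg, hψ, hφ]
  norm_num

end
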